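/- For a consistent F₁ s-theory Γ and F₁-formula φ, φ is a strict consequence of Γ if and only if φ is derivable from Γ using rules (I), (HS), and (N). -/

import Mathlib

/-!
Call a valuation closed when it respects every derivable implication; the principal valuation
`V ↦ (X ⥽ V is derivable)` is closed and true at `X`. If `A ⋢ B` is not derivable, the closed
valuations satisfying `A → B` form a frame for `Γ`: a nonimplication `X ⋢ Y ∈ Γ` is witnessed by
the principal valuation of `X`, joined with that of `B` when `X ⥽ A` is derivable, and rule (N) is
exactly what keeps `Y` false there. Taking `B = A` gives the frame of all closed valuations, which
refutes every underivable `A ⥽ B`.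
-/

/-- F₁-formulas: strict implications `imp X Y` (X ⥽ Y) and nonimplications `nimp X Y` (X ⋢ Y)
between single propositional variables. -/
inductive F1 (σ : Type) : Type
  | imp : σ → σ → F1 σ
  | nimp : σ → σ → F1 σ

/-- A frame satisfies an F₁-formula. -/
def F1.sat {σ : Type} (R : Set (σ → Bool)) : F1 σ → Prop
  | .imp X Y => ∀ w ∈ R, w X = true → w Y = true
  | .nimp X Y => ∃ w ∈ R, w X = true ∧ w Y = false

/-- Derivability in the F₁ deductive system: rules (I), (HS), (N). -/
inductive Der1 {σ : Type} (Γ : Set (F1 σ)) : F1 σ → Prop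
  | mem {φ : F1 σ} : φ ∈ Γ → Der1 Γ φ
  | I (X : σ) : Der1 Γ (.imp X X)
  | HS {X Y Z : σ} : Der1 Γ (.imp X Y) → Der1 Γ (.imp Y Z) → Der1 Γ (.imp X Z)
  | N {W X Y Z : σ} : Der1 Γ (.nimp X Y) → Der1 Γ (.imp X W) → Der1 Γ (.imp Z Y) →
      Der1 Γ (.nimp W Z)

namespace Der1

variable {σ : Type} {Γ : Set (F1 σ)}

theorem sound {φ : F1 σ} (h : Der1 Γ φ) {R : Set (σ → Bool)} (hR : ∀ ψ ∈ Γ, ψ.sat R) :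
    φ.sat R := by
  induction h with
  | mem hφ => exact hR _ hφ
  | I X => exact fun _ _ hX => hX
  | HS _ _ ihXY ihYZ => exact fun w hw hX => ihYZ w hw (ihXY w hw hX)
  | N _ _ _ ihXY ihXW ihZY =>
    obtain ⟨w, hw, hX, hY⟩ := ihXY
    refine ⟨w, hw, ihXW w hw hX, ?_⟩
    cases hZ : w _
    · rfl
    · simp [ihZY w hw hZ] at hY

theorem not_imp_of_nimp_mem {R : Set (σ → Bool)} (hR : ∀ ψ ∈ Γ, ψ.sat R) {X Y : σ}
    (hXY : F1.nimp X Y ∈ Γ) : ¬ Der1 Γ (.imp X Y) := fun hd => by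
  obtain ⟨w, hw, hX, hY⟩ := hR _ hXY
  simp [sound hd hR w hw hX] at hY

theorem not_nimp_self {R : Set (σ → Bool)} (hR : ∀ ψ ∈ Γ, ψ.sat R) (Y : σ) :
    ¬ Der1 Γ (.nimp Y Y) := fun hd => by
  obtain ⟨w, -, hY, hY'⟩ := sound hd hR
  simp [hY] at hY'

variable (Γ)

def Closed (w : σ → Bool) : Prop :=
  ∀ ⦃U V : σ⦄, Der1 Γ (.imp U V) → w U = true → w V = true

open Classical in
noncomputable def principalVal (X : σ) : σ → Bool :=
  fun V => decide (Der1 Γ (.imp X V))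

def canonicalFrame (A B : σ) : Set (σ → Bool) :=
  {w | Closed Γ w ∧ (w A = true → w B = true)}

variable {Γ}

@[simp]
theorem principalVal_eq_true {X V : σ} : principalVal Γ X V = true ↔ Der1 Γ (.imp X V) := by
  classical
  simp [principalVal]

@[simp]
theorem principalVal_eq_false {X V : σ} : principalVal Γ X V = false ↔ ¬ Der1 Γ (.imp X V) := by
  rw [← Bool.not_eq_true, principalVal_eq_true]

theorem closed_principalVal (X : σ) : Closed Γ (principalVal Γ X) := by
  intro U V hUV hU
  rw [principalVal_eq_true] at hU ⊢
  exact hU.HS hUV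

theorem Closed.sup {w w' : σ → Bool} (hw : Closed Γ w) (hw' : Closed Γ w') :
    Closed Γ (w ⊔ w') := by
  intro U V hUV hU
  simp only [Pi.sup_apply, Bool.max_eq_or, Bool.or_eq_true] at hU ⊢
  exact hU.imp (hw hUV) (hw' hUV)

theorem canonicalFrame_nonempty (A B : σ) : (canonicalFrame Γ A B).Nonempty :=
  ⟨fun _ => true, fun _ _ _ _ => rfl, fun _ => rfl⟩

theorem sat_canonicalFrame {R : Set (σ → Bool)} (hR : ∀ ψ ∈ Γ, ψ.sat R) {A B : σ}
    (hAB : ¬ Der1 Γ (.nimp A B)) : ∀ ψ ∈ Γ, ψ.sat (canonicalFrame Γ A B) := by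
  rintro (⟨U, V⟩ | ⟨X, Y⟩) hψ
  · exact fun w hw hU => hw.1 (.mem hψ) hU
  have hXY := not_imp_of_nimp_mem hR hψ
  by_cases hXA : Der1 Γ (.imp X A)
  · have hBY : ¬ Der1 Γ (.imp B Y) := fun hBY => hAB (.N (.mem hψ) hXA hBY)
    refine ⟨principalVal Γ X ⊔ principalVal Γ B,
      ⟨(closed_principalVal X).sup (closed_principalVal B), fun _ => ?_⟩, ?_, ?_⟩ <;>
      simp [Der1.I, hXY, hBY]
  · refine ⟨principalVal Γ X, ⟨closed_principalVal X, fun hA => ?_⟩, ?_, ?_⟩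
    · exact absurd (principalVal_eq_true.mp hA) hXA
    · simpa using Der1.I X
    · simpa using hXY

theorem complete {R : Set (σ → Bool)} (hR : ∀ ψ ∈ Γ, ψ.sat R) {φ : F1 σ}
    (hφ : ∀ R : Set (σ → Bool), R.Nonempty → (∀ ψ ∈ Γ, ψ.sat R) → φ.sat R) : Der1 Γ φ := by
  cases φ with
  | imp A B =>
    have hframe := sat_canonicalFrame hR (not_nimp_self hR A)
    have hB := hφ _ (canonicalFrame_nonempty A A) hframe (principalVal Γ A)
      ⟨closed_principalVal A, id⟩ (by simp [Der1.I])
    simpa using hB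
  | nimp A B =>
    by_contra hAB
    obtain ⟨w, hw, hA, hB⟩ :=
      hφ _ (canonicalFrame_nonempty A B) (sat_canonicalFrame hR hAB)
    simp [hw.2 hA] at hB

end Der1

theorem stmt7_general {σ : Type} (Γ : Set (F1 σ)) (φ : F1 σ)
    (hcons : ∃ R : Set (σ → Bool), R.Nonempty ∧ ∀ ψ ∈ Γ, ψ.sat R) :
    (∀ R : Set (σ → Bool), R.Nonempty → (∀ ψ ∈ Γ, ψ.sat R) → φ.sat R) ↔ Der1 Γ φ := by
  obtain ⟨_, -, hR⟩ := hcons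
  exact ⟨Der1.complete hR, fun hd _ _ hsat => hd.sound hsat⟩

theorem stmt7 {σ : Type} [Infinite σ] (Γ : Set (F1 σ)) (φ : F1 σ)
    (hcons : ∃ R : Set (σ → Bool), R.Nonempty ∧ ∀ ψ ∈ Γ, ψ.sat R) :
    (∀ R : Set (σ → Bool), R.Nonempty → (∀ ψ ∈ Γ, ψ.sat R) → φ.sat R) ↔ Der1 Γ φ :=
  stmt7_general Γ φ hcons
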